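/- If a non-elliptic self-embedding g of a tree T leaves a double ray invariant (setwise), then g is hyperbolic, i.e., it fixes exactly the two ends determined by that double ray and no other end. -/

import Mathlib

open SimpleGraph

variable {V : Type*}

/-- `g` is a self-embedding of `G`: injective and adjacency-preserving. -/
def IsEmb (G : SimpleGraph V) (g : V → V) : Prop :=
  Function.Injective g ∧ ∀ u v : V, G.Adj u v → G.Adj (g u) (g v)

/-- A ray in `G`: a one-way infinite path. -/
structure GRay (G : SimpleGraph V) where
  f : ℕ → V
  inj : Function.Injective f
  adj : ∀ n, G.Adj (f n) (f (n + 1))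

/-- Two rays are equivalent (lie in the same end): for every vertex `v` they have
tails avoiding `v` lying in the same component of `G − v`. -/
def RayEquiv (G : SimpleGraph V) (R S : GRay G) : Prop :=
  ∀ v : V, ∃ m n : ℕ, (∀ i, m ≤ i → R.f i ≠ v) ∧ (∀ j, n ≤ j → S.f j ≠ v) ∧
    ∃ w : G.Walk (R.f m) (S.f n), v ∉ w.support

/-- `g` fixes the end represented by the ray `R`: the image ray is equivalent to `R`. -/
def FixesEnd (G : SimpleGraph V) (g : V → V) (R : GRay G) : Prop :=
  ∃ S : GRay G, (∀ n, S.f n = g (R.f n)) ∧ RayEquiv G S R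

def FixesVertex (g : V → V) : Prop := ∃ v, g v = v

/-- `g` fixes an edge setwise (possibly swapping its endpoints). -/
def FixesEdge (G : SimpleGraph V) (g : V → V) : Prop :=
  ∃ u v : V, G.Adj u v ∧ ((g u = u ∧ g v = v) ∨ (g u = v ∧ g v = u))

/-- `g` fixes setwise a non-empty finite subtree of `G`. -/
def FixesFiniteSubtree (G : SimpleGraph V) (g : V → V) : Prop :=
  ∃ S : Set V, S.Nonempty ∧ S.Finite ∧ (G.induce S).Connected ∧ g '' S = S

/-- `R` is a ray with `g(R) ⊆ R`; for non-elliptic `g` its end is the direction `g⁺`. -/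
def DirectionRay (G : SimpleGraph V) (g : V → V) (R : GRay G) : Prop :=
  ∀ n, ∃ m, g (R.f n) = R.f m

/-- `w` lies in the component of `G − x` containing the end of `R`. -/
def InComp (G : SimpleGraph V) (x : V) (R : GRay G) (w : V) : Prop :=
  ∃ m, (∀ i, m ≤ i → R.f i ≠ x) ∧ ∃ p : G.Walk w (R.f m), x ∉ p.support

/-- A sequence of vertices converges to the end represented by `R`. -/
def ConvergesTo (G : SimpleGraph V) (x : ℕ → V) (R : GRay G) : Prop :=
  ∀ v : V, ∃ N : ℕ, ∀ n, N ≤ n → InComp G v R (x n)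

/-- `M` is a submonoid of `Emb(G)`. -/
def IsEmbMonoid (G : SimpleGraph V) (M : Set (V → V)) : Prop :=
  (∀ g ∈ M, IsEmb G g) ∧ (id ∈ M) ∧ ∀ g ∈ M, ∀ h ∈ M, (g ∘ h) ∈ M

/-- The end of `R` is an accumulation point of the orbit of `v0` under `M`:
every basic neighbourhood of the end of `R` meets the orbit. -/
def InLimitSet (G : SimpleGraph V) (M : Set (V → V)) (v0 : V) (R : GRay G) : Prop :=
  ∀ x : V, ∃ g ∈ M, InComp G x R (g v0)

/-- A self-embedding is elliptic if it fixes a non-empty finite subtree. -/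
def Elliptic (G : SimpleGraph V) (g : V → V) : Prop := FixesFiniteSubtree G g

/-- `g` is hyperbolic: not elliptic and it fixes exactly two ends. -/
def Hyperbolic (G : SimpleGraph V) (g : V → V) : Prop :=
  ¬ Elliptic G g ∧ ∃ R1 R2 : GRay G, ¬ RayEquiv G R1 R2 ∧
    FixesEnd G g R1 ∧ FixesEnd G g R2 ∧
    ∀ S : GRay G, FixesEnd G g S → RayEquiv G S R1 ∨ RayEquiv G S R2

/-- `g` is parabolic: not elliptic and it fixes exactly one end. -/
def Parabolic (G : SimpleGraph V) (g : V → V) : Prop :=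
  ¬ Elliptic G g ∧ ∃ R : GRay G, FixesEnd G g R ∧
    ∀ S : GRay G, FixesEnd G g S → RayEquiv G S R

/-!
On indices, `g` restricted to the invariant double ray `d` is an injective map `ℤ → ℤ` moving
neighbours to neighbours, hence a translation `n ↦ n + c` or a reflection `n ↦ c - n`. A reflection
fixes a vertex or flips an edge, as does the translation with `c = 0`, so `g` translates `d` by
some `c ≠ 0`.

Every vertex `x` has a gate: the index where paths from `x` first meet `d`. The map `g` shifts gates
by `c`, and a walk between vertices with different gates passes through every vertex of `d` between
them. Hence the two ends of `d` are distinct and fixed, and a ray whose gates are unbounded above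
(below) lies in the end of the positive (negative) half of `d`. A ray whose gates are bounded has
eventually constant gate `t`; its image then has gate `t + c`, so `d t` separates the two tails and
the end of the ray is not fixed.
-/

open Filter

namespace SimpleGraph

variable {G : SimpleGraph V} {u v w : V}

theorem Walk.IsPath.append_of_support_inter {p : G.Walk u v} {q : G.Walk v w}
    (hp : p.IsPath) (hq : q.IsPath) (h : ∀ z ∈ p.support, z ∈ q.support → z = v) :
    (p.append q).IsPath := by
  rw [Walk.isPath_def, Walk.support_append]
  have hq' := hq.support_nodup
  rw [← Walk.cons_tail_support, List.nodup_cons] at hq'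
  refine hp.support_nodup.append hq'.2 fun z hz hz' => ?_
  obtain rfl := h z hz (Walk.cons_tail_support q ▸ List.mem_cons_of_mem _ hz')
  exact hq'.1 hz'

theorem IsAcyclic.support_subset_of_isPath (hG : G.IsAcyclic) {p : G.Walk u v} (hp : p.IsPath)
    (q : G.Walk u v) : p.support ⊆ q.support := by
  classical
  have := hG.subsingleton_path u v
  have : p = q.bypass :=
    congrArg Subtype.val (Subsingleton.elim ⟨p, hp⟩ ⟨q.bypass, q.bypass_isPath⟩)
  exact this ▸ q.support_bypass_subset_support

end SimpleGraph

theorem Int.exists_eq_add_or_exists_eq_sub_of_injective {σ : ℤ → ℤ} (hinj : σ.Injective)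
    (hstep : ∀ n, σ (n + 1) = σ n + 1 ∨ σ (n + 1) = σ n - 1) :
    (∃ c, ∀ n, σ n = n + c) ∨ (∃ c, ∀ n, σ n = c - n) := by
  -- `σ` cannot step back, so all its steps are equal to the first one, `e`
  have hsteps : Function.Periodic (fun n => σ (n + 1) - σ n) 1 := fun n => by
    have hback : σ (n + 1 + 1) ≠ σ n := hinj.ne (by omega)
    rcases hstep n with h | h <;> rcases hstep (n + 1) with h' | h' <;> grind
  set e := σ 1 - σ 0
  have hlin : Function.Periodic (fun n => σ n - n * e) 1 := fun n => by
    have := hsteps.int_mul_eq n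
    simp only [Int.cast_id, mul_one, zero_add] at this
    grind
  have hσ (n : ℤ) : σ n = σ 0 + n * e := by
    have := hlin.int_mul_eq n
    simp only [Int.cast_id, mul_one, zero_mul, sub_zero] at this
    linarith
  rcases hstep 0 with h | h
  · exact .inl ⟨σ 0, fun n => by rw [hσ n, show e = 1 by grind]; ring⟩
  · exact .inr ⟨σ 0, fun n => by rw [hσ n, show e = -1 by grind]; ring⟩

theorem elliptic_of_apply_eq {G : SimpleGraph V} {g : V → V} {v : V} (hv : g v = v) :
    Elliptic G g :=
  ⟨{v}, Set.singleton_nonempty v, Set.finite_singleton v, by simp, by simp [hv]⟩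

theorem elliptic_of_swap {G : SimpleGraph V} {g : V → V} {u v : V} (huv : G.Adj u v)
    (hu : g u = v) (hv : g v = u) : Elliptic G g :=
  ⟨{u, v}, Set.insert_nonempty u {v}, Set.toFinite _, induce_pair_connected_of_adj huv,
    by rw [Set.image_pair, hu, hv, Set.pair_comm]⟩

namespace GRay

variable {G : SimpleGraph V} (R : GRay G)

theorem exists_forall_ne (v : V) : ∃ N, ∀ i, N ≤ i → R.f i ≠ v := by
  by_cases h : ∃ k, R.f k = v
  · obtain ⟨k, rfl⟩ := h
    exact ⟨k + 1, fun i hi hik => by have := R.inj hik; omega⟩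
  · exact ⟨0, fun i _ => not_exists.1 h i⟩

theorem exists_walk_of_le {m n : ℕ} (hmn : m ≤ n) :
    ∃ w : G.Walk (R.f m) (R.f n), ∀ z ∈ w.support, ∃ i, m ≤ i ∧ R.f i = z := by
  induction n, hmn using Nat.le_induction with
  | base => exact ⟨.nil, fun z hz => ⟨m, le_rfl, (List.mem_singleton.1 hz).symm⟩⟩
  | succ n hmn ih =>
    obtain ⟨w, hw⟩ := ih
    refine ⟨w.concat (R.adj n), fun z hz => ?_⟩
    rw [Walk.support_concat, List.mem_append, List.mem_singleton] at hz
    rcases hz with hz | rfl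
    · exact hw z hz
    · exact ⟨n + 1, by omega, rfl⟩

def map {g : V → V} (hg : IsEmb G g) : GRay G :=
  ⟨g ∘ R.f, hg.1.comp R.inj, fun n => hg.2 _ _ (R.adj n)⟩

end GRay

structure DoubleRay (G : SimpleGraph V) where
  f : ℤ → V
  inj : Function.Injective f
  adj : ∀ n, G.Adj (f n) (f (n + 1))

namespace DoubleRay

variable {G : SimpleGraph V} (D : DoubleRay G)

theorem exists_isPath_Icc {a b : ℤ} (hab : a ≤ b) :
    ∃ p : G.Walk (D.f a) (D.f b), p.IsPath ∧ ∀ z, z ∈ p.support ↔ ∃ i ∈ Set.Icc a b, D.f i = z := by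
  induction b, hab using Int.leInduction with
  | base => exact ⟨.nil, .nil, fun z => by simp [eq_comm]⟩
  | succ b hab ih =>
    obtain ⟨p, hp, hsupp⟩ := ih
    have hmem (z : V) : z ∈ (p.concat (D.adj b)).support ↔ z ∈ p.support ∨ z = D.f (b + 1) := by
      simp [Walk.support_concat, or_comm]
    refine ⟨p.concat (D.adj b), hp.concat (fun h => ?_) _, fun z => ?_⟩
    · obtain ⟨i, hi, hib⟩ := (hsupp _).1 h
      have := D.inj hib
      grind
    · rw [hmem, hsupp]
      constructor
      · rintro (⟨i, hi, rfl⟩ | rfl)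
        · exact ⟨i, ⟨hi.1, by grind⟩, rfl⟩
        · exact ⟨b + 1, ⟨by omega, le_rfl⟩, rfl⟩
      · rintro ⟨i, ⟨hai, hib⟩, rfl⟩
        rcases hib.lt_or_eq with hib | rfl
        · exact .inl ⟨i, ⟨hai, by omega⟩, rfl⟩
        · exact .inr rfl

theorem exists_isPath_uIcc (a b : ℤ) :
    ∃ p : G.Walk (D.f a) (D.f b), p.IsPath ∧
      ∀ z, z ∈ p.support ↔ ∃ i ∈ Set.uIcc a b, D.f i = z := by
  rcases le_total a b with hab | hba
  · rw [Set.uIcc_of_le hab]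
    exact D.exists_isPath_Icc hab
  · obtain ⟨p, hp, hsupp⟩ := D.exists_isPath_Icc hba
    refine ⟨p.reverse, hp.reverse, fun z => ?_⟩
    rw [Set.uIcc_of_ge hba, Walk.support_reverse, List.mem_reverse, hsupp]

def IsGateWalk {x : V} {t : ℤ} (p : G.Walk x (D.f t)) : Prop :=
  ∀ z ∈ p.support, z ∈ Set.range D.f → z = D.f t

theorem exists_isGateWalk (hG : G.Preconnected) (x : V) :
    ∃ t, ∃ p : G.Walk x (D.f t), D.IsGateWalk p := by
  suffices ∀ {x y : V} (w : G.Walk x y), y ∈ Set.range D.f →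
      ∃ t, ∃ p : G.Walk x (D.f t), D.IsGateWalk p from this (hG x (D.f 0)).some ⟨0, rfl⟩
  intro x y w
  induction w with
  | nil =>
    rintro ⟨t, rfl⟩
    exact ⟨t, .nil, by simp [IsGateWalk]⟩
  | @cons x _ _ hadj w ih =>
    intro hy
    by_cases hx : x ∈ Set.range D.f
    · obtain ⟨t, rfl⟩ := hx
      exact ⟨t, .nil, by simp [IsGateWalk]⟩
    · obtain ⟨t, p, hp⟩ := ih hy
      refine ⟨t, .cons hadj p, fun z hz hzD => ?_⟩
      rcases List.mem_cons.1 (Walk.support_cons hadj p ▸ hz) with rfl | hz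
      · exact absurd hzD hx
      · exact hp z hz hzD

open Classical in
noncomputable def gate (x : V) : ℤ :=
  if h : ∃ t, ∃ p : G.Walk x (D.f t), D.IsGateWalk p then h.choose else 0

theorem exists_isGateWalk_gate (hG : G.Preconnected) (x : V) :
    ∃ p : G.Walk x (D.f (D.gate x)), D.IsGateWalk p := by
  have h := D.exists_isGateWalk hG x
  rw [gate, dif_pos h]
  exact h.choose_spec

theorem mem_support_of_isGateWalk (hG : G.IsAcyclic) {x : V} {t s k : ℤ}
    {p : G.Walk x (D.f t)} (hp : D.IsGateWalk p) (q : G.Walk x (D.f s)) (hk : k ∈ Set.uIcc t s) :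
    D.f k ∈ q.support := by
  classical
  obtain ⟨r, hr, hrsupp⟩ := D.exists_isPath_uIcc t s
  have hpath : (p.bypass.append r).IsPath :=
    p.bypass_isPath.append_of_support_inter hr fun z hz hzr =>
      hp z (p.support_bypass_subset_support hz) (by obtain ⟨i, -, rfl⟩ := (hrsupp z).1 hzr; simp)
  exact hG.support_subset_of_isPath hpath q <|
    (Walk.mem_support_append_iff _ _).2 (.inr ((hrsupp _).2 ⟨k, hk, rfl⟩))

theorem eq_add_one_or_eq_sub_one_of_adj (hG : G.IsAcyclic) {i j : ℤ} (h : G.Adj (D.f i) (D.f j)) :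
    j = i + 1 ∨ j = i - 1 := by
  have hne : i ≠ j := fun hij => h.ne (congrArg D.f hij)
  have hmem (k : ℤ) (hk : k ∈ Set.uIcc i j) : k = i ∨ k = j := by
    have := D.mem_support_of_isGateWalk hG (p := .nil) (by simp [IsGateWalk]) (.cons h .nil) hk
    simpa [D.inj.eq_iff] using this
  rcases lt_or_gt_of_ne hne with hij | hji
  · have := hmem (i + 1) (Set.mem_uIcc.2 (.inl ⟨by omega, by omega⟩))
    omega
  · have := hmem (i - 1) (Set.mem_uIcc.2 (.inr ⟨by omega, by omega⟩))
    omega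

theorem gate_eq_of_isGateWalk (hT : G.IsTree) {x : V} {t : ℤ} {p : G.Walk x (D.f t)}
    (hp : D.IsGateWalk p) : D.gate x = t := by
  obtain ⟨q, hq⟩ := D.exists_isGateWalk_gate hT.connected.preconnected x
  have := D.mem_support_of_isGateWalk hT.isAcyclic hp q Set.left_mem_uIcc
  exact (D.inj (hq _ this ⟨t, rfl⟩)).symm

theorem gate_apply (hT : G.IsTree) (s : ℤ) : D.gate (D.f s) = s :=
  D.gate_eq_of_isGateWalk hT (p := .nil) (by simp [IsGateWalk])

theorem gate_eq_of_mem_support (hT : G.IsTree) {x z : V} {t : ℤ} {p : G.Walk x (D.f t)}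
    (hp : D.IsGateWalk p) (hz : z ∈ p.support) : D.gate z = t := by
  classical
  exact D.gate_eq_of_isGateWalk hT (p := p.dropUntil z hz) fun y hy =>
    hp y (p.support_dropUntil_subset_support hz hy)

theorem gate_eq_or_eq_of_adj (hT : G.IsTree) {x y : V} (h : G.Adj x y) :
    D.gate x = D.gate y ∨ x = D.f (D.gate x) := by
  by_cases hx : x ∈ Set.range D.f
  · obtain ⟨s, rfl⟩ := hx
    exact .inr (by rw [D.gate_apply hT])
  · obtain ⟨p, hp⟩ := D.exists_isGateWalk_gate hT.connected.preconnected y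
    refine .inl (D.gate_eq_of_isGateWalk hT (p := .cons h p) fun z hz hzD => ?_)
    rcases List.mem_cons.1 (Walk.support_cons h p ▸ hz) with rfl | hz
    · exact absurd hzD hx
    · exact hp z hz hzD

theorem exists_walk_gate_mem_uIcc (hT : G.IsTree) (x y : V) :
    ∃ w : G.Walk x y, ∀ z ∈ w.support, D.gate z ∈ Set.uIcc (D.gate x) (D.gate y) := by
  obtain ⟨p, hp⟩ := D.exists_isGateWalk_gate hT.connected.preconnected x
  obtain ⟨q, hq⟩ := D.exists_isGateWalk_gate hT.connected.preconnected y
  obtain ⟨r, -, hr⟩ := D.exists_isPath_uIcc (D.gate x) (D.gate y)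
  refine ⟨p.append (r.append q.reverse), fun z hz => ?_⟩
  simp only [Walk.mem_support_append_iff, Walk.support_reverse, List.mem_reverse] at hz
  rcases hz with hz | hz | hz
  · rw [D.gate_eq_of_mem_support hT hp hz]
    exact Set.left_mem_uIcc
  · obtain ⟨i, hi, rfl⟩ := (hr z).1 hz
    rwa [D.gate_apply hT]
  · rw [D.gate_eq_of_mem_support hT hq hz]
    exact Set.right_mem_uIcc

theorem mem_support_of_gate_ne (hT : G.IsTree) {x y : V} (hxy : D.gate x ≠ D.gate y) {k : ℤ}
    (hk : k ∈ Set.uIcc (D.gate x) (D.gate y)) (w : G.Walk x y) : D.f k ∈ w.support := by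
  have key {x y : V} (w : G.Walk x y) {k : ℤ} (hk : k ∈ Set.uIcc (D.gate x) (D.gate y))
      (hky : k ≠ D.gate y) : D.f k ∈ w.support := by
    obtain ⟨p, hp⟩ := D.exists_isGateWalk_gate hT.connected.preconnected x
    obtain ⟨q, hq⟩ := D.exists_isGateWalk_gate hT.connected.preconnected y
    rcases (Walk.mem_support_append_iff _ _).1
      (D.mem_support_of_isGateWalk hT.isAcyclic hp (w.append q) hk) with h | h
    · exact h
    · exact absurd (D.inj (hq _ h ⟨k, rfl⟩)) hky
  by_cases hky : k = D.gate y
  · subst hky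
    simpa using key w.reverse Set.left_mem_uIcc hxy.symm
  · exact key w hk hky

theorem rayEquiv_of_gate (hT : G.IsTree) {R S : GRay G}
    (h : ∀ (K : ℤ) (N : ℕ), ∃ i ≥ N, ∃ j ≥ N, K ∉ Set.uIcc (D.gate (R.f i)) (D.gate (S.f j))) :
    RayEquiv G R S := by
  intro v
  obtain ⟨N₁, hN₁⟩ := R.exists_forall_ne v
  obtain ⟨N₂, hN₂⟩ := S.exists_forall_ne v
  obtain ⟨i, hi, j, hj, hK⟩ := h (D.gate v) (max N₁ N₂)
  obtain ⟨w, hw⟩ := D.exists_walk_gate_mem_uIcc hT (R.f i) (S.f j)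
  exact ⟨i, j, fun i' hi' => hN₁ i' (by omega), fun j' hj' => hN₂ j' (by omega), w,
    fun hv => hK (hw v hv)⟩

theorem not_rayEquiv_of_gate (hT : G.IsTree) {R S : GRay G} (k : ℤ) (N : ℕ)
    (h : ∀ i ≥ N, ∀ j ≥ N, D.gate (R.f i) ≠ D.gate (S.f j) ∧
      k ∈ Set.uIcc (D.gate (R.f i)) (D.gate (S.f j))) :
    ¬RayEquiv G R S := by
  intro hRS
  obtain ⟨m, n, hm, hn, w, hw⟩ := hRS (D.f k)
  obtain ⟨wR, hwR⟩ := R.exists_walk_of_le (show m ≤ m + n + N by omega)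
  obtain ⟨wS, hwS⟩ := S.exists_walk_of_le (show n ≤ m + n + N by omega)
  obtain ⟨hne, hk⟩ := h (m + n + N) (by omega) (m + n + N) (by omega)
  have := D.mem_support_of_gate_ne hT hne hk (wR.reverse.append (w.append wS))
  simp only [Walk.mem_support_append_iff, Walk.support_reverse, List.mem_reverse] at this
  rcases this with h' | h' | h'
  · obtain ⟨i, hi, hik⟩ := hwR _ h'
    exact hm i hi hik
  · exact hw h'
  · obtain ⟨j, hj, hjk⟩ := hwS _ h'
    exact hn j hj hjk

theorem rayEquiv_of_frequently_lt_gate (hT : G.IsTree) {R S : GRay G}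
    (hR : ∀ K, ∃ᶠ i in atTop, K < D.gate (R.f i))
    (hS : Tendsto (fun j => D.gate (S.f j)) atTop atTop) : RayEquiv G R S := by
  refine D.rayEquiv_of_gate hT fun K N => ?_
  obtain ⟨i, hi, hKi⟩ := frequently_atTop.1 (hR K) N
  obtain ⟨j, hKj, hj⟩ := ((hS.eventually_gt_atTop K).and (eventually_ge_atTop N)).exists
  exact ⟨i, hi, j, hj, fun hK => by rw [Set.mem_uIcc] at hK; omega⟩

theorem rayEquiv_of_frequently_gate_lt (hT : G.IsTree) {R S : GRay G}
    (hR : ∀ K, ∃ᶠ i in atTop, D.gate (R.f i) < K)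
    (hS : Tendsto (fun j => D.gate (S.f j)) atTop atBot) : RayEquiv G R S := by
  refine D.rayEquiv_of_gate hT fun K N => ?_
  obtain ⟨i, hi, hKi⟩ := frequently_atTop.1 (hR K) N
  obtain ⟨j, hKj, hj⟩ := ((hS.eventually_lt_atBot K).and (eventually_ge_atTop N)).exists
  exact ⟨i, hi, j, hj, fun hK => by rw [Set.mem_uIcc] at hK; omega⟩

theorem not_rayEquiv_of_tendsto (hT : G.IsTree) {R S : GRay G}
    (hR : Tendsto (fun i => D.gate (R.f i)) atTop atTop)
    (hS : Tendsto (fun j => D.gate (S.f j)) atTop atBot) : ¬RayEquiv G R S := by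
  obtain ⟨N, hN⟩ := eventually_atTop.1 ((hR.eventually_gt_atTop 0).and (hS.eventually_lt_atBot 0))
  exact D.not_rayEquiv_of_gate hT 0 N fun i hi j hj => by
    have := (hN i hi).1
    have := (hN j hj).2
    exact ⟨by omega, Set.mem_uIcc.2 (.inr ⟨by omega, by omega⟩)⟩

theorem eventuallyConst_gate (hT : G.IsTree) (S : GRay G) {a b : ℤ}
    (h : ∀ᶠ i in atTop, D.gate (S.f i) ∈ Set.Icc a b) :
    EventuallyConst (fun i => D.gate (S.f i)) atTop := by
  -- the gate only changes where `S` is on the double ray, which happens finitely often in `[a, b]`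
  have hfin : (S.f ⁻¹' (D.f '' Set.Icc a b)).Finite :=
    ((Set.finite_Icc a b).image D.f).preimage S.inj.injOn
  obtain ⟨N, hN⟩ := eventually_atTop.1 h
  obtain ⟨M, hM⟩ := hfin.bddAbove
  refine eventuallyConst_atTop_nat.2 ⟨max N (M + 1), fun m hm => ?_⟩
  rcases D.gate_eq_or_eq_of_adj hT (S.adj m) with heq | hon
  · exact heq.symm
  · have := hM (show m ∈ S.f ⁻¹' (D.f '' Set.Icc a b) from ⟨_, hN m (by omega), hon.symm⟩)
    omega

variable {g : V → V} {c : ℤ}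

theorem gate_apply_eq_add (hT : G.IsTree) (hg : IsEmb G g) (hgD : ∀ n, g (D.f n) = D.f (n + c))
    (x : V) : D.gate (g x) = D.gate x + c := by
  obtain ⟨p, hp⟩ := D.exists_isGateWalk_gate hT.connected.preconnected x
  let φ : G →g G := ⟨g, hg.2 _ _⟩
  refine D.gate_eq_of_isGateWalk hT (p := (p.map φ).copy rfl (hgD _)) fun z hz hzD => ?_
  rw [Walk.support_copy, Walk.support_map, List.mem_map] at hz
  obtain ⟨u, hu, rfl⟩ := hz
  obtain ⟨m, hm⟩ := hzD
  have huD : D.f (m - c) = u := hg.1 (by rw [hgD, sub_add_cancel]; exact hm)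
  rw [hp u hu ⟨m - c, huD⟩]
  exact hgD _

theorem fixesEnd_of_tendsto_atTop (hT : G.IsTree) (hg : IsEmb G g)
    (hgD : ∀ n, g (D.f n) = D.f (n + c)) {R : GRay G}
    (hR : Tendsto (fun i => D.gate (R.f i)) atTop atTop) : FixesEnd G g R := by
  refine ⟨R.map hg, fun _ => rfl, D.rayEquiv_of_frequently_lt_gate hT (fun K => ?_) hR⟩
  have : Tendsto (fun i => D.gate ((R.map hg).f i)) atTop atTop := by
    simpa [GRay.map, D.gate_apply_eq_add hT hg hgD] using tendsto_atTop_add_const_right _ c hR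
  exact (this.eventually_gt_atTop K).frequently

theorem fixesEnd_of_tendsto_atBot (hT : G.IsTree) (hg : IsEmb G g)
    (hgD : ∀ n, g (D.f n) = D.f (n + c)) {R : GRay G}
    (hR : Tendsto (fun i => D.gate (R.f i)) atTop atBot) : FixesEnd G g R := by
  refine ⟨R.map hg, fun _ => rfl, D.rayEquiv_of_frequently_gate_lt hT (fun K => ?_) hR⟩
  have : Tendsto (fun i => D.gate ((R.map hg).f i)) atTop atBot := by
    simpa [GRay.map, D.gate_apply_eq_add hT hg hgD] using tendsto_atBot_add_const_right _ c hR
  exact (this.eventually_lt_atBot K).frequently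

theorem not_fixesEnd_of_eventually_gate_mem_Icc (hT : G.IsTree) (hg : IsEmb G g)
    (hgD : ∀ n, g (D.f n) = D.f (n + c)) (hc : c ≠ 0) {S : GRay G} {a b : ℤ}
    (h : ∀ᶠ i in atTop, D.gate (S.f i) ∈ Set.Icc a b) : ¬FixesEnd G g S := by
  rintro ⟨S', hS', hequiv⟩
  obtain ⟨M, hM⟩ := eventuallyConst_atTop.1 (D.eventuallyConst_gate hT S h)
  refine D.not_rayEquiv_of_gate hT (D.gate (S.f M)) M (fun i hi j hj => ?_) hequiv
  rw [hS', D.gate_apply_eq_add hT hg hgD, hM i hi, hM j hj]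
  exact ⟨by omega, Set.right_mem_uIcc⟩

theorem rayEquiv_or_rayEquiv_of_fixesEnd (hT : G.IsTree) (hg : IsEmb G g)
    (hgD : ∀ n, g (D.f n) = D.f (n + c)) (hc : c ≠ 0) {Rp Rm S : GRay G}
    (hRp : Tendsto (fun i => D.gate (Rp.f i)) atTop atTop)
    (hRm : Tendsto (fun i => D.gate (Rm.f i)) atTop atBot) (hS : FixesEnd G g S) :
    RayEquiv G S Rp ∨ RayEquiv G S Rm := by
  by_cases htop : ∀ K, ∃ᶠ i in atTop, K < D.gate (S.f i)
  · exact .inl (D.rayEquiv_of_frequently_lt_gate hT htop hRp)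
  by_cases hbot : ∀ K, ∃ᶠ i in atTop, D.gate (S.f i) < K
  · exact .inr (D.rayEquiv_of_frequently_gate_lt hT hbot hRm)
  simp only [not_forall, not_frequently, not_lt] at htop hbot
  obtain ⟨b, hb⟩ := htop
  obtain ⟨a, ha⟩ := hbot
  exact absurd hS (D.not_fixesEnd_of_eventually_gate_mem_Icc hT hg hgD hc (ha.and hb))

theorem exists_apply_eq_add_of_not_elliptic (hG : G.IsAcyclic) (hg : IsEmb G g)
    (hne : ¬Elliptic G g) (hinv : g '' Set.range D.f ⊆ Set.range D.f) :
    ∃ c ≠ 0, ∀ n, g (D.f n) = D.f (n + c) := by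
  have hσ (n : ℤ) : ∃ m, g (D.f n) = D.f m := by
    obtain ⟨m, hm⟩ := hinv ⟨D.f n, ⟨n, rfl⟩, rfl⟩
    exact ⟨m, hm.symm⟩
  choose σ hσ using hσ
  have hinj : σ.Injective := fun a b hab => D.inj (hg.1 (by rw [hσ, hσ, hab]))
  have hstep (n : ℤ) : σ (n + 1) = σ n + 1 ∨ σ (n + 1) = σ n - 1 :=
    D.eq_add_one_or_eq_sub_one_of_adj hG (by rw [← hσ, ← hσ]; exact hg.2 _ _ (D.adj n))
  rcases Int.exists_eq_add_or_exists_eq_sub_of_injective hinj hstep with ⟨c, hc⟩ | ⟨c, hc⟩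
  · refine ⟨c, fun h0 => hne (elliptic_of_apply_eq (v := D.f 0) ?_), fun n => by rw [hσ, hc]⟩
    rw [hσ, hc, h0, add_zero]
  · obtain ⟨k, rfl | rfl⟩ := Int.even_or_odd' c
    · exact absurd (elliptic_of_apply_eq (v := D.f k) (by rw [hσ, hc]; congr 1; ring)) hne
    · exact absurd (elliptic_of_swap (D.adj k) (by rw [hσ, hc]; congr 1; ring)
        (by rw [hσ, hc]; congr 1; ring)) hne

end DoubleRay

theorem stmt5 (G : SimpleGraph V) (hT : G.IsTree) (g : V → V) (hg : IsEmb G g)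
    (hne : ¬ Elliptic G g)
    (d : ℤ → V) (hdinj : Function.Injective d) (hdadj : ∀ n : ℤ, G.Adj (d n) (d (n + 1)))
    (hinv : g '' Set.range d = Set.range d)
    (Rp Rm : GRay G) (hRp : ∀ n : ℕ, Rp.f n = d (n : ℤ)) (hRm : ∀ n : ℕ, Rm.f n = d (-(n : ℤ))) :
    ¬ RayEquiv G Rp Rm ∧ FixesEnd G g Rp ∧ FixesEnd G g Rm ∧
      ∀ S : GRay G, FixesEnd G g S → RayEquiv G S Rp ∨ RayEquiv G S Rm := by
  let D : DoubleRay G := ⟨d, hdinj, hdadj⟩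
  obtain ⟨c, hc, hgD⟩ := D.exists_apply_eq_add_of_not_elliptic hT.isAcyclic hg hne hinv.subset
  have hp : Tendsto (fun n => D.gate (Rp.f n)) atTop atTop :=
    tendsto_natCast_atTop_atTop.congr fun n => by rw [hRp]; exact (D.gate_apply hT n).symm
  have hm : Tendsto (fun n => D.gate (Rm.f n)) atTop atBot :=
    (tendsto_neg_atTop_atBot.comp tendsto_natCast_atTop_atTop).congr fun n => by
      rw [hRm]; exact (D.gate_apply hT _).symm
  exact ⟨D.not_rayEquiv_of_tendsto hT hp hm, D.fixesEnd_of_tendsto_atTop hT hg hgD hp,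
    D.fixesEnd_of_tendsto_atBot hT hg hgD hm,
    fun S hS => D.rayEquiv_or_rayEquiv_of_fixesEnd hT hg hgD hc hp hm hS⟩
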